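/- Let g : ℤ^d → [0,∞) with |g| = Σ_x g(x) < ∞, and fix constants b, r ∈ [0,∞). There exists a constant C < ∞ (depending only on g, b, r, d) such that for every probability vector ρ on ℤ^d and every ξ : ℤ^d → [0,∞) with ξ_x ≤ b·1_{\{|x| ≤ r\}} for all x, the following holds. For z ∈ ℤ^d with 1 + (|ξ|−1)ρ_z > 0, define J̄_{x,z} = (ρ_x + (ξ−δ₀)_{x−z} ρ_z)/(1 + (|ξ|−1)ρ_z) and F_z(ξ) = Σ_{x,y∈ℤ^d} g(x−y)( J̄_{x,z} J̄_{y,z} − ρ_x ρ_y ). Then: (i) |F_z(ξ)| ≤ 2|g|; (ii) if moreover ρ_z ≤ 1/2, then |F_z(ξ)| ≤ C ρ_z; (iii) if 1 + (|ξ|−1)ρ_z > 0 for all z ∈ ℤ^d, then Σ_{z∈ℤ^d} F_z(ξ)² ≤ (16|g|² + C²) Σ_{x∈ℤ^d} ρ_x². -/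

import Mathlib

/-!
Put `M = ∑ g`. Since `g (x - y) ≤ M`, each `F z` is at most `M ‖J̄ ⊗ J̄ - ρ ⊗ ρ‖₁` in absolute
value, and for probability vectors `‖J̄ ⊗ J̄ - ρ ⊗ ρ‖₁ ≤ min 2 (2 ‖J̄ - ρ‖₁)`. Updating `ρ` at `z`
moves only `O(|ξ| ρ_z)` of mass, and when `ρ_z ≤ 1/2` the normalizing factor is at least `1/2`,
so `‖J̄ - ρ‖₁ ≤ 4 (|ξ| + 1) ρ_z`, where `|ξ|` is bounded by `b` times the size of the
`ℓ¹`-ball of radius `r`. For (iii), a site with `ρ_z > 1/2` has `|F z| ≤ 2M < 4M ρ_z`, so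
`F z² ≤ (16 M² + C²) ρ_z²` at every site.
-/

section ProductDifference

variable {α : Type*}

lemma abs_tsum_mul_le_of_abs_le {φ f : α → ℝ} {M : ℝ} (hφ : ∀ a, |φ a| ≤ M)
    (hf : Summable fun a => |f a|) :
    |∑' a, φ a * f a| ≤ M * ∑' a, |f a| := by
  have hle : ∀ a, |φ a * f a| ≤ M * |f a| := fun a => by
    rw [abs_mul]; exact mul_le_mul_of_nonneg_right (hφ a) (abs_nonneg _)
  have hMf : Summable fun a => M * |f a| := hf.mul_left M
  have habs : Summable fun a => |φ a * f a| := hMf.of_nonneg_of_le (fun _ => abs_nonneg _) hle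
  calc |∑' a, φ a * f a| ≤ ∑' a, |φ a * f a| := by
        simpa only [Real.norm_eq_abs] using norm_tsum_le_tsum_norm (f := fun a => φ a * f a)
          (by simpa only [Real.norm_eq_abs] using habs)
    _ ≤ ∑' a, M * |f a| := habs.tsum_le_tsum hle hMf
    _ = M * ∑' a, |f a| := tsum_mul_left

variable {J ρ : α → ℝ}

lemma summable_abs_mul_sub_mul (hJ0 : ∀ a, 0 ≤ J a) (hJ : Summable J) (hρ0 : ∀ a, 0 ≤ ρ a)
    (hρ : Summable ρ) : Summable fun q : α × α => |J q.1 * J q.2 - ρ q.1 * ρ q.2| :=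
  ((hJ.mul_of_nonneg hJ hJ0 hJ0).sub (hρ.mul_of_nonneg hρ hρ0 hρ0)).abs

lemma tsum_abs_mul_sub_mul_le_two (hJ0 : ∀ a, 0 ≤ J a) (hJ : HasSum J 1)
    (hρ0 : ∀ a, 0 ≤ ρ a) (hρ : HasSum ρ 1) :
    ∑' q : α × α, |J q.1 * J q.2 - ρ q.1 * ρ q.2| ≤ 2 := by
  have hJJ := hJ.summable.mul_of_nonneg hJ.summable hJ0 hJ0
  have hρρ := hρ.summable.mul_of_nonneg hρ.summable hρ0 hρ0
  have hle : ∀ q : α × α, |J q.1 * J q.2 - ρ q.1 * ρ q.2| ≤ J q.1 * J q.2 + ρ q.1 * ρ q.2 :=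
    fun q => (abs_sub _ _).trans_eq <| by
      rw [abs_of_nonneg (mul_nonneg (hJ0 _) (hJ0 _)),
        abs_of_nonneg (mul_nonneg (hρ0 _) (hρ0 _))]
  calc ∑' q : α × α, |J q.1 * J q.2 - ρ q.1 * ρ q.2|
      ≤ ∑' q : α × α, (J q.1 * J q.2 + ρ q.1 * ρ q.2) :=
        (summable_abs_mul_sub_mul hJ0 hJ.summable hρ0 hρ.summable).tsum_le_tsum hle
          (hJJ.add hρρ)
    _ = 1 * 1 + 1 * 1 := ((hJ.mul hJ hJJ).add (hρ.mul hρ hρρ)).tsum_eq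
    _ = 2 := by norm_num

lemma tsum_abs_mul_sub_mul_le (hJ0 : ∀ a, 0 ≤ J a) (hJ : HasSum J 1)
    (hρ0 : ∀ a, 0 ≤ ρ a) (hρ : HasSum ρ 1) :
    ∑' q : α × α, |J q.1 * J q.2 - ρ q.1 * ρ q.2| ≤ 2 * ∑' a, |J a - ρ a| := by
  set e : α → ℝ := fun a => |J a - ρ a|
  have he : Summable e := (hJ.summable.sub hρ.summable).abs
  have hJe := hJ.summable.mul_of_nonneg he hJ0 fun _ => abs_nonneg _
  have heρ := he.mul_of_nonneg hρ.summable (fun _ => abs_nonneg _) hρ0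
  have hle : ∀ q : α × α, |J q.1 * J q.2 - ρ q.1 * ρ q.2| ≤ J q.1 * e q.2 + e q.1 * ρ q.2 := by
    intro q
    calc |J q.1 * J q.2 - ρ q.1 * ρ q.2|
        = |J q.1 * (J q.2 - ρ q.2) + (J q.1 - ρ q.1) * ρ q.2| := by ring_nf
      _ ≤ |J q.1 * (J q.2 - ρ q.2)| + |(J q.1 - ρ q.1) * ρ q.2| := abs_add_le _ _
      _ = J q.1 * e q.2 + e q.1 * ρ q.2 := by
        rw [abs_mul, abs_mul, abs_of_nonneg (hJ0 _), abs_of_nonneg (hρ0 _)]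
  calc ∑' q : α × α, |J q.1 * J q.2 - ρ q.1 * ρ q.2|
      ≤ ∑' q : α × α, (J q.1 * e q.2 + e q.1 * ρ q.2) :=
        (summable_abs_mul_sub_mul hJ0 hJ.summable hρ0 hρ.summable).tsum_le_tsum hle
          (hJe.add heρ)
    _ = 1 * ∑' a, e a + (∑' a, e a) * 1 :=
        ((hJ.mul he.hasSum hJe).add (he.hasSum.mul hρ heρ)).tsum_eq
    _ = 2 * ∑' a, |J a - ρ a| := by ring

lemma abs_tsum_kernel_mul_sub_le {G : Type*} [Sub G] {g J ρ : G → ℝ} (hg0 : ∀ x, 0 ≤ g x)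
    (hg : Summable g) (hJ0 : ∀ a, 0 ≤ J a) (hJ : Summable J) (hρ0 : ∀ a, 0 ≤ ρ a)
    (hρ : Summable ρ) :
    |∑' q : G × G, g (q.1 - q.2) * (J q.1 * J q.2 - ρ q.1 * ρ q.2)| ≤
      (∑' x, g x) * ∑' q : G × G, |J q.1 * J q.2 - ρ q.1 * ρ q.2| :=
  abs_tsum_mul_le_of_abs_le
    (fun _ => (abs_of_nonneg (hg0 _)).trans_le (hg.le_tsum _ fun x _ => hg0 x))
    (summable_abs_mul_sub_mul hJ0 hJ hρ0 hρ)

lemma abs_tsum_kernel_mul_sub_le_two_mul {G : Type*} [Sub G] {g J ρ : G → ℝ}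
    (hg0 : ∀ x, 0 ≤ g x) (hg : Summable g) (hJ0 : ∀ a, 0 ≤ J a) (hJ : HasSum J 1)
    (hρ0 : ∀ a, 0 ≤ ρ a) (hρ : HasSum ρ 1) :
    |∑' q : G × G, g (q.1 - q.2) * (J q.1 * J q.2 - ρ q.1 * ρ q.2)| ≤ 2 * ∑' x, g x :=
  (abs_tsum_kernel_mul_sub_le hg0 hg hJ0 hJ.summable hρ0 hρ.summable).trans <| by
    rw [mul_comm 2]
    exact mul_le_mul_of_nonneg_left (tsum_abs_mul_sub_mul_le_two hJ0 hJ hρ0 hρ)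
      (tsum_nonneg hg0)

lemma abs_tsum_kernel_mul_sub_le_two_mul_tsum_abs_sub {G : Type*} [Sub G] {g J ρ : G → ℝ}
    (hg0 : ∀ x, 0 ≤ g x) (hg : Summable g) (hJ0 : ∀ a, 0 ≤ J a) (hJ : HasSum J 1)
    (hρ0 : ∀ a, 0 ≤ ρ a) (hρ : HasSum ρ 1) :
    |∑' q : G × G, g (q.1 - q.2) * (J q.1 * J q.2 - ρ q.1 * ρ q.2)| ≤
      2 * (∑' x, g x) * ∑' a, |J a - ρ a| :=
  (abs_tsum_kernel_mul_sub_le hg0 hg hJ0 hJ.summable hρ0 hρ.summable).trans <| by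
    refine (mul_le_mul_of_nonneg_left (tsum_abs_mul_sub_mul_le hJ0 hJ hρ0 hρ)
      (tsum_nonneg hg0)).trans_eq ?_
    ring

end ProductDifference

section NormalizedUpdate

variable {G : Type*} [AddGroup G] [DecidableEq G]

/-- `J̄_{x,z}` in the notation of the statement. -/
noncomputable def normalizedUpdate (ρ ξ : G → ℝ) (z x : G) : ℝ :=
  (ρ x + (ξ (x - z) - if x - z = 0 then 1 else 0) * ρ z) / (1 + ((∑' u, ξ u) - 1) * ρ z)

variable {ρ ξ : G → ℝ} {z : G}

lemma hasSum_delta_sub (z : G) : HasSum (fun x : G => if x - z = 0 then (1 : ℝ) else 0) 1 := by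
  simpa only [sub_eq_zero] using hasSum_ite_eq z (1 : ℝ)

lemma hasSum_normalizedUpdate (hρ : HasSum ρ 1) (hξ : Summable ξ)
    (hD : 1 + ((∑' u, ξ u) - 1) * ρ z ≠ 0) : HasSum (normalizedUpdate ρ ξ z) 1 := by
  have hshift : HasSum (fun x => ξ (x - z)) (∑' u, ξ u) :=
    (Equiv.subRight z).hasSum_iff.mpr hξ.hasSum
  have := (hρ.add ((hshift.sub (hasSum_delta_sub z)).mul_right (ρ z))).div_const
    (1 + ((∑' u, ξ u) - 1) * ρ z)
  rwa [div_self hD] at this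

lemma normalizedUpdate_nonneg (hρ0 : ∀ x, 0 ≤ ρ x) (hξ0 : ∀ x, 0 ≤ ξ x)
    (hD : 0 < 1 + ((∑' u, ξ u) - 1) * ρ z) (x : G) : 0 ≤ normalizedUpdate ρ ξ z x := by
  refine div_nonneg ?_ hD.le
  split_ifs with hxz
  · rw [sub_eq_zero.mp hxz, sub_self]
    nlinarith [hξ0 0, hρ0 z]
  · nlinarith [hξ0 (x - z), hρ0 x, hρ0 z]

lemma normalizedUpdate_sub_self (hD : 1 + ((∑' u, ξ u) - 1) * ρ z ≠ 0) (x : G) :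
    normalizedUpdate ρ ξ z x - ρ x =
      ρ z / (1 + ((∑' u, ξ u) - 1) * ρ z) *
        ((ξ (x - z) - if x - z = 0 then 1 else 0) - ((∑' u, ξ u) - 1) * ρ x) := by
  rw [normalizedUpdate, div_mul_eq_mul_div, eq_div_iff hD, sub_mul, div_mul_cancel₀ _ hD]
  ring

lemma tsum_abs_normalizedUpdate_sub_le (hρ0 : ∀ x, 0 ≤ ρ x) (hρ : HasSum ρ 1)
    (hξ0 : ∀ x, 0 ≤ ξ x) (hξ : Summable ξ) (hz : ρ z ≤ 1 / 2) :
    ∑' x, |normalizedUpdate ρ ξ z x - ρ x| ≤ 4 * ((∑' u, ξ u) + 1) * ρ z := by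
  set T := ∑' u, ξ u
  set D := 1 + (T - 1) * ρ z
  have hT0 : 0 ≤ T := tsum_nonneg hξ0
  have hD : 1 / 2 ≤ D := by nlinarith [hρ0 z]
  set v : G → ℝ := fun x => (ξ (x - z) - if x - z = 0 then 1 else 0) - (T - 1) * ρ x
  have hmaj : HasSum (fun x => ξ (x - z) + (if x - z = 0 then 1 else 0) + (T + 1) * ρ x)
      (T + 1 + (T + 1) * 1) :=
    (((Equiv.subRight z).hasSum_iff.mpr hξ.hasSum).add (hasSum_delta_sub z)).add
      (hρ.mul_left _)
  have hv : ∀ x, |v x| ≤ ξ (x - z) + (if x - z = 0 then 1 else 0) + (T + 1) * ρ x := by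
    intro x
    have hδ : (0 : ℝ) ≤ if x - z = 0 then 1 else 0 := by split_ifs <;> norm_num
    have hTabs : |T - 1| ≤ T + 1 := abs_le.mpr ⟨by linarith, by linarith⟩
    calc |v x| ≤ |ξ (x - z) - if x - z = 0 then 1 else 0| + |(T - 1) * ρ x| := abs_sub _ _
      _ ≤ |ξ (x - z)| + |if x - z = 0 then (1 : ℝ) else 0| + |T - 1| * ρ x := by
        rw [abs_mul, abs_of_nonneg (hρ0 x)]
        gcongr
        exact abs_sub _ _
      _ ≤ ξ (x - z) + (if x - z = 0 then 1 else 0) + (T + 1) * ρ x := by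
        rw [abs_of_nonneg (hξ0 _), abs_of_nonneg hδ]
        gcongr
        exact hρ0 x
  have hvsum : ∑' x, |v x| ≤ 2 * (T + 1) := by
    calc ∑' x, |v x| ≤ T + 1 + (T + 1) * 1 :=
          (((hmaj.summable.of_nonneg_of_le (fun _ => abs_nonneg _) hv)).tsum_le_tsum hv
            hmaj.summable).trans_eq hmaj.tsum_eq
      _ = 2 * (T + 1) := by ring
  have hcoef : ρ z / D ≤ 2 * ρ z := by
    rw [div_le_iff₀ (by linarith)]; nlinarith [hρ0 z]
  have hdiff : ∀ x, |normalizedUpdate ρ ξ z x - ρ x| = ρ z / D * |v x| := fun x => by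
    rw [normalizedUpdate_sub_self (by linarith) x, abs_mul,
      abs_of_nonneg (div_nonneg (hρ0 z) (by linarith))]
  calc ∑' x, |normalizedUpdate ρ ξ z x - ρ x| = ρ z / D * ∑' x, |v x| := by
        rw [tsum_congr hdiff, tsum_mul_left]
    _ ≤ 2 * ρ z * (2 * (T + 1)) :=
        mul_le_mul hcoef hvsum (tsum_nonneg fun _ => abs_nonneg _) (by linarith [hρ0 z])
    _ = 4 * (T + 1) * ρ z := by ring

end NormalizedUpdate

lemma summable_and_tsum_le_mul_ncard {α : Type*} {p : α → Prop} [DecidablePred p]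
    (hp : {x | p x}.Finite) {ξ : α → ℝ} {b : ℝ}
    (hξ : ∀ x, 0 ≤ ξ x ∧ ξ x ≤ b * if p x then 1 else 0) :
    Summable ξ ∧ ∑' x, ξ x ≤ b * {x | p x}.ncard := by
  have hvan : ∀ x ∉ hp.toFinset, ξ x = 0 := fun x hx => by
    have := (hξ x).2
    rw [if_neg (by simpa using hx), mul_zero] at this
    exact this.antisymm (hξ x).1
  refine ⟨summable_of_ne_finset_zero hvan, ?_⟩
  rw [tsum_eq_sum hvan, Set.ncard_eq_toFinset_card _ hp, mul_comm, ← nsmul_eq_mul,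
    ← Finset.sum_const]
  refine Finset.sum_le_sum fun x hx => ?_
  have hpx : p x := by simpa using hx
  simpa [hpx] using (hξ x).2

lemma finite_setOf_sum_abs_le {ι : Type*} [Fintype ι] [DecidableEq ι] (r : ℝ) :
    {x : ι → ℤ | ((∑ i, |x i| : ℤ) : ℝ) ≤ r}.Finite := by
  refine (Set.finite_Icc (fun _ => -⌈r⌉) fun _ => ⌈r⌉).subset fun x hx => ?_
  refine forall_and.mp fun i => ?_
  have hxi : |x i| ≤ ∑ j, |x j| :=
    Finset.single_le_sum (fun j _ => abs_nonneg (x j)) (Finset.mem_univ i)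
  have hceil : ((|x i| : ℤ) : ℝ) ≤ ⌈r⌉ := ((Int.cast_le.mpr hxi).trans hx).trans (Int.le_ceil r)
  exact abs_le.mp (Int.cast_le.mp hceil)

lemma sq_le_of_abs_le_two_mul {f M C p : ℝ} (hf : |f| ≤ 2 * M)
    (hsmall : p ≤ 1 / 2 → |f| ≤ C * p) :
    f ^ 2 ≤ (16 * M ^ 2 + C ^ 2) * p ^ 2 := by
  rw [← sq_abs]
  by_cases hp : p ≤ 1 / 2
  · nlinarith [pow_le_pow_left₀ (abs_nonneg f) (hsmall hp) 2, sq_nonneg (M * p)]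
  · have : |f| ≤ 4 * M * p := by nlinarith [abs_nonneg f]
    nlinarith [pow_le_pow_left₀ (abs_nonneg f) this 2, sq_nonneg (C * p)]

lemma tsum_sq_le_of_abs_le {α : Type*} {F ρ : α → ℝ} {M C : ℝ} (hρ0 : ∀ z, 0 ≤ ρ z)
    (hρ : HasSum ρ 1) (hF : ∀ z, |F z| ≤ 2 * M) (hsmall : ∀ z, ρ z ≤ 1 / 2 → |F z| ≤ C * ρ z) :
    ∑' z, F z ^ 2 ≤ (16 * M ^ 2 + C ^ 2) * ∑' z, ρ z ^ 2 := by
  have hρ2 : Summable fun z => ρ z ^ 2 :=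
    hρ.summable.of_nonneg_of_le (fun z => sq_nonneg _) fun z => by
      nlinarith [hρ0 z, le_hasSum hρ z fun j _ => hρ0 j]
  have hle : ∀ z, F z ^ 2 ≤ (16 * M ^ 2 + C ^ 2) * ρ z ^ 2 := fun z =>
    sq_le_of_abs_le_two_mul (hF z) (hsmall z)
  rw [← tsum_mul_left]
  exact ((hρ2.mul_left _).of_nonneg_of_le (fun z => sq_nonneg _) hle).tsum_le_tsum hle
    (hρ2.mul_left _)

theorem stmt13_general {d : ℕ} (g : (Fin d → ℤ) → ℝ)
    (hg0 : ∀ x, 0 ≤ g x) (hg : Summable g)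
    (b r : ℝ) :
    ∃ C : ℝ, ∀ ρ ξ : (Fin d → ℤ) → ℝ, (∀ x, 0 ≤ ρ x) → HasSum ρ 1 →
      (∀ x, 0 ≤ ξ x ∧ ξ x ≤ b * (if ((∑ i, |x i| : ℤ) : ℝ) ≤ r then 1 else 0)) →
      ∀ F : (Fin d → ℤ) → ℝ,
        (∀ z, F z = ∑' q : (Fin d → ℤ) × (Fin d → ℤ), g (q.1 - q.2) *
            (((ρ q.1 + (ξ (q.1 - z) - (if q.1 - z = 0 then 1 else 0)) * ρ z) /
                  (1 + ((∑' u, ξ u) - 1) * ρ z)) *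
                ((ρ q.2 + (ξ (q.2 - z) - (if q.2 - z = 0 then 1 else 0)) * ρ z) /
                  (1 + ((∑' u, ξ u) - 1) * ρ z)) -
              ρ q.1 * ρ q.2)) →
        (∀ z, 0 < 1 + ((∑' u, ξ u) - 1) * ρ z → |F z| ≤ 2 * ∑' x, g x) ∧
        (∀ z, 0 < 1 + ((∑' u, ξ u) - 1) * ρ z → ρ z ≤ 1 / 2 → |F z| ≤ C * ρ z) ∧
        ((∀ z, 0 < 1 + ((∑' u, ξ u) - 1) * ρ z) →
          ∑' z, (F z) ^ 2 ≤ (16 * (∑' x, g x) ^ 2 + C ^ 2) * ∑' x, (ρ x) ^ 2) := by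
  set N := {x : Fin d → ℤ | ((∑ i, |x i| : ℤ) : ℝ) ≤ r}.ncard
  refine ⟨8 * (∑' x, g x) * (b * N + 1), fun ρ ξ hρ0 hρ hξ F hF => ?_⟩
  obtain ⟨hξs, hT⟩ := summable_and_tsum_le_mul_ncard (finite_setOf_sum_abs_le r) hξ
  have hξ0 : ∀ x, 0 ≤ ξ x := fun x => (hξ x).1
  have hJ0 := fun z hD => normalizedUpdate_nonneg (z := z) hρ0 hξ0 hD
  have hJ := fun z (hD : 0 < _) => hasSum_normalizedUpdate (z := z) hρ hξs hD.ne'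
  have hlarge : ∀ z, 0 < 1 + ((∑' u, ξ u) - 1) * ρ z → |F z| ≤ 2 * ∑' x, g x := fun z hD =>
    (hF z).symm ▸ abs_tsum_kernel_mul_sub_le_two_mul hg0 hg (hJ0 z hD) (hJ z hD) hρ0 hρ
  have hsmall : ∀ z, 0 < 1 + ((∑' u, ξ u) - 1) * ρ z → ρ z ≤ 1 / 2 →
      |F z| ≤ 8 * (∑' x, g x) * (b * N + 1) * ρ z := fun z hD hz => by
    rw [hF z]
    refine (abs_tsum_kernel_mul_sub_le_two_mul_tsum_abs_sub hg0 hg (hJ0 z hD) (hJ z hD) hρ0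
      hρ).trans ?_
    have hupdate := tsum_abs_normalizedUpdate_sub_le hρ0 hρ hξ0 hξs hz
    have hM0 : 0 ≤ ∑' x, g x := tsum_nonneg hg0
    calc 2 * (∑' x, g x) * ∑' a, |normalizedUpdate ρ ξ z a - ρ a|
        ≤ 2 * (∑' x, g x) * (4 * ((∑' u, ξ u) + 1) * ρ z) := by gcongr
      _ ≤ 8 * (∑' x, g x) * (b * N + 1) * ρ z := by
        nlinarith [mul_nonneg hM0 (hρ0 z)]
  exact ⟨hlarge, hsmall, fun hD =>
    tsum_sq_le_of_abs_le hρ0 hρ (fun z => hlarge z (hD z)) fun z => hsmall z (hD z)⟩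

/-- Bounds on the one-update overlap increment: for `g ∈ ℓ¹` nonnegative and constants
`b, r`, there is a constant `C` such that for any probability vector `ρ`, any kernel
`ξ` with `0 ≤ ξ_x ≤ b·1_{|x|≤r}`, and
`F_z(ξ) = Σ_{x,y} g(x−y)(J̄_{x,z} J̄_{y,z} − ρ_x ρ_y)` (with
`J̄_{x,z} = (ρ_x + (ξ−δ₀)_{x−z}ρ_z)/(1+(|ξ|−1)ρ_z)`):
(i) `|F_z(ξ)| ≤ 2|g|`; (ii) `|F_z(ξ)| ≤ C ρ_z` whenever `ρ_z ≤ 1/2`;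
(iii) `Σ_z F_z(ξ)² ≤ (16|g|² + C²) Σ_x ρ_x²`. -/
theorem stmt13 {d : ℕ} (g : (Fin d → ℤ) → ℝ)
    (hg0 : ∀ x, 0 ≤ g x) (hg : Summable g)
    (b r : ℝ) (hb : 0 ≤ b) (hr : 0 ≤ r) :
    ∃ C : ℝ, ∀ ρ ξ : (Fin d → ℤ) → ℝ, (∀ x, 0 ≤ ρ x) → HasSum ρ 1 →
      (∀ x, 0 ≤ ξ x ∧ ξ x ≤ b * (if ((∑ i, |x i| : ℤ) : ℝ) ≤ r then 1 else 0)) →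
      ∀ F : (Fin d → ℤ) → ℝ,
        (∀ z, F z = ∑' q : (Fin d → ℤ) × (Fin d → ℤ), g (q.1 - q.2) *
            (((ρ q.1 + (ξ (q.1 - z) - (if q.1 - z = 0 then 1 else 0)) * ρ z) /
                  (1 + ((∑' u, ξ u) - 1) * ρ z)) *
                ((ρ q.2 + (ξ (q.2 - z) - (if q.2 - z = 0 then 1 else 0)) * ρ z) /
                  (1 + ((∑' u, ξ u) - 1) * ρ z)) -
              ρ q.1 * ρ q.2)) →
        (∀ z, 0 < 1 + ((∑' u, ξ u) - 1) * ρ z → |F z| ≤ 2 * ∑' x, g x) ∧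
        (∀ z, 0 < 1 + ((∑' u, ξ u) - 1) * ρ z → ρ z ≤ 1 / 2 → |F z| ≤ C * ρ z) ∧
        ((∀ z, 0 < 1 + ((∑' u, ξ u) - 1) * ρ z) →
          ∑' z, (F z) ^ 2 ≤ (16 * (∑' x, g x) ^ 2 + C ^ 2) * ∑' x, (ρ x) ^ 2) :=
  stmt13_general g hg0 hg b r
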